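/- If the unitary matrices U_1, …, U_m generate a finite multiplicative group of d×d unitary matrices, then every eigenvalue λ of Φ with |λ| = 1 is a root of unity: there exists a natural number k ≥ 1 with λ^k = 1. -/

import Mathlib

open Matrix BigOperators

/-!
Unitary conjugation preserves the Hilbert–Schmidt inner product, so the matrices `Uᵢ X Uᵢᴴ` all
have the norm of `λ X`, while their convex combination `Φ X` equals `λ X`. In an inner product space
a convex combination of vectors of norm `r` has norm `r` only if they all coincide, hence
`Uᵢ X Uᵢᴴ = λ X` for every `i`. Conjugating `k` times by a generator `Uᵢ` of finite order `k` gives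
`X = λ ^ k X`, so `λ ^ k = 1`.
-/

section InnerProductSpace

variable {𝕜 E ι : Type*} [RCLike 𝕜] [NormedAddCommGroup E] [InnerProductSpace 𝕜 E]

theorem eq_of_norm_eq_of_sum_smul_eq {s : Finset ι} {w : ι → ℝ} (hw : ∀ i ∈ s, 0 < w i)
    (hw₁ : ∑ i ∈ s, w i = 1) {y : ι → E} {x : E} (hy : ∀ i ∈ s, ‖y i‖ = ‖x‖)
    (hx : ∑ i ∈ s, (w i : 𝕜) • y i = x) : ∀ i ∈ s, y i = x := by
  -- the weighted variance `∑ wᵢ ‖yᵢ - x‖²` equals `∑ wᵢ ‖yᵢ‖² - ‖x‖² = 0`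
  have hvar : ∑ i ∈ s, w i * ‖y i - x‖ ^ 2 = 0 := calc
    ∑ i ∈ s, w i * ‖y i - x‖ ^ 2
        = ∑ i ∈ s, w i * (2 * ‖x‖ ^ 2) - 2 * RCLike.re (inner 𝕜 (∑ i ∈ s, (w i : 𝕜) • y i) x) := by
      simp only [sum_inner, inner_smul_left, RCLike.conj_ofReal, map_sum, RCLike.re_ofReal_mul,
        Finset.mul_sum, ← Finset.sum_sub_distrib]
      refine Finset.sum_congr rfl fun i hi => ?_
      rw [@norm_sub_sq 𝕜, hy i hi]
      ring
    _ = 0 := by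
      rw [hx, ← Finset.sum_mul, hw₁, ← norm_sq_eq_re_inner]
      ring
  intro i hi
  have hterm := (Finset.sum_eq_zero_iff_of_nonneg fun j hj =>
    mul_nonneg (hw j hj).le (sq_nonneg _)).mp hvar i hi
  simpa [sub_eq_zero, (hw i hi).ne'] using hterm

end InnerProductSpace

namespace Matrix

variable {n 𝕜 : Type*} [Fintype n] [DecidableEq n] [RCLike 𝕜]

open scoped ComplexOrder in
noncomputable abbrev hilbertSchmidtNormedAddCommGroup : NormedAddCommGroup (Matrix n n 𝕜) :=
  toMatrixNormedAddCommGroup 1 PosDef.one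

attribute [local instance] hilbertSchmidtNormedAddCommGroup

open scoped ComplexOrder in
noncomputable abbrev hilbertSchmidtInnerProductSpace : InnerProductSpace 𝕜 (Matrix n n 𝕜) :=
  toMatrixInnerProductSpace 1 PosDef.one.posSemidef

attribute [local instance] hilbertSchmidtInnerProductSpace

theorem hilbertSchmidt_inner_def (A B : Matrix n n 𝕜) : inner 𝕜 A B = (B * Aᴴ).trace := by
  change (B * 1 * Aᴴ).trace = _
  rw [mul_one]

theorem hilbertSchmidt_inner_unitary_conj {u : Matrix n n 𝕜} (hu : u ∈ unitaryGroup n 𝕜)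
    (A B : Matrix n n 𝕜) : inner 𝕜 (u * A * uᴴ) (u * B * uᴴ) = inner 𝕜 A B := by
  have hu' : uᴴ * u = 1 := by simpa [star_eq_conjTranspose] using hu.1
  have hconj : u * B * uᴴ * (u * A * uᴴ)ᴴ = u * (B * Aᴴ) * uᴴ := by
    simp only [conjTranspose_mul, conjTranspose_conjTranspose, mul_assoc, ← mul_assoc uᴴ u, hu',
      one_mul]
  rw [hilbertSchmidt_inner_def, hilbertSchmidt_inner_def, hconj, trace_mul_cycle, hu', one_mul]

theorem unitary_conj_eq_smul_of_sum_eq {ι : Type*} {s : Finset ι} {w : ι → ℝ}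
    (hw : ∀ i ∈ s, 0 < w i) (hw₁ : ∑ i ∈ s, w i = 1) {U : ι → unitaryGroup n 𝕜}
    {X : Matrix n n 𝕜} {c : 𝕜} (hc : ‖c‖ = 1)
    (h : ∑ i ∈ s, (w i : 𝕜) • ((U i : Matrix n n 𝕜) * X * (U i : Matrix n n 𝕜)ᴴ) = c • X) :
    ∀ i ∈ s, (U i : Matrix n n 𝕜) * X * (U i : Matrix n n 𝕜)ᴴ = c • X := by
  refine eq_of_norm_eq_of_sum_smul_eq hw hw₁ (fun i _ => ?_) h
  rw [norm_smul, hc, one_mul, norm_eq_sqrt_re_inner (𝕜 := 𝕜), norm_eq_sqrt_re_inner (𝕜 := 𝕜),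
    hilbertSchmidt_inner_unitary_conj (U i).2]

theorem conj_pow_eq_smul {α : Type*} [CommSemiring α] [StarRing α] {u X : Matrix n n α} {c : α}
    (h : u * X * uᴴ = c • X) (k : ℕ) : u ^ k * X * (u ^ k)ᴴ = c ^ k • X := by
  induction k with
  | zero => simp
  | succ k ih =>
    calc u ^ (k + 1) * X * (u ^ (k + 1))ᴴ = u * (u ^ k * X * (u ^ k)ᴴ) * uᴴ := by
          simp only [pow_succ', conjTranspose_mul, conjTranspose_pow, mul_assoc]
      _ = c ^ (k + 1) • X := by rw [ih, Matrix.mul_smul, Matrix.smul_mul, h, smul_smul, pow_succ]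

theorem exists_pow_eq_one_of_conj_eq_smul {α : Type*} [Field α] [StarRing α]
    {u X : Matrix n n α} {c : α} (hu : IsOfFinOrder u) (hX : X ≠ 0) (h : u * X * uᴴ = c • X) :
    ∃ k, 1 ≤ k ∧ c ^ k = 1 := by
  obtain ⟨k, hk, huk⟩ := hu.exists_pow_eq_one
  refine ⟨k, hk, smul_left_injective α hX ?_⟩
  simpa [huk] using (conj_pow_eq_smul h k).symm

end Matrix

theorem stmt_15_general {d m : ℕ}
    (U : Fin m → Matrix.unitaryGroup (Fin d) ℂ)
    (hfin : (Subgroup.closure (Set.range U) : Set (Matrix.unitaryGroup (Fin d) ℂ)).Finite)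
    (p : Fin m → ℝ) (hp : ∀ i, 0 < p i) (hpsum : ∑ i, p i = 1)
    (Φ : Matrix (Fin d) (Fin d) ℂ → Matrix (Fin d) (Fin d) ℂ)
    (hΦ : ∀ ρ, Φ ρ = ∑ i, (p i : ℂ) •
      ((U i : Matrix (Fin d) (Fin d) ℂ) * ρ * (U i : Matrix (Fin d) (Fin d) ℂ)ᴴ))
    (lam : ℂ) (hlam : ‖lam‖ = 1)
    (X : Matrix (Fin d) (Fin d) ℂ) (hX : X ≠ 0)
    (heig : Φ X = lam • X) :
    ∃ k : ℕ, 1 ≤ k ∧ lam ^ k = 1 := by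
  have hfix := Matrix.unitary_conj_eq_smul_of_sum_eq (fun i _ => hp i) hpsum hlam
    ((hΦ X).symm.trans heig)
  obtain ⟨i⟩ : Nonempty (Fin m) := by
    by_contra h
    simp [not_nonempty_iff.mp h] at hpsum
  have : Finite (Subgroup.closure (Set.range U)) := hfin.to_subtype
  have hU : IsOfFinOrder (U i : Matrix (Fin d) (Fin d) ℂ) :=
    (Submonoid.subtype _).isOfFinOrder <| (Subgroup.subtype _).isOfFinOrder <|
      isOfFinOrder_of_finite (⟨U i, Subgroup.subset_closure ⟨i, rfl⟩⟩ :
        Subgroup.closure (Set.range U))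
  exact Matrix.exists_pow_eq_one_of_conj_eq_smul hU hX (hfix i (Finset.mem_univ i))

theorem stmt_15 {d m : ℕ} (hd : 1 ≤ d)
    (U : Fin m → Matrix.unitaryGroup (Fin d) ℂ)
    (hfin : (Subgroup.closure (Set.range U) : Set (Matrix.unitaryGroup (Fin d) ℂ)).Finite)
    (p : Fin m → ℝ) (hp : ∀ i, 0 < p i) (hpsum : ∑ i, p i = 1)
    (Φ : Matrix (Fin d) (Fin d) ℂ → Matrix (Fin d) (Fin d) ℂ)
    (hΦ : ∀ ρ, Φ ρ = ∑ i, (p i : ℂ) •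
      ((U i : Matrix (Fin d) (Fin d) ℂ) * ρ * (U i : Matrix (Fin d) (Fin d) ℂ)ᴴ))
    (lam : ℂ) (hlam : ‖lam‖ = 1)
    (X : Matrix (Fin d) (Fin d) ℂ) (hX : X ≠ 0)
    (heig : Φ X = lam • X) :
    ∃ k : ℕ, 1 ≤ k ∧ lam ^ k = 1 :=
  stmt_15_general U hfin p hp hpsum Φ hΦ lam hlam X hX heig
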